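/- Let w be a hyperbolic element of the affine Weyl group W^aff. If the translation vector v_w is parallel to the fundamental coweight β∨ and Min(w) is not contained in any wall, then w stabilizes some geodesic tube of direction β∨. -/

import Mathlib

open scoped RealInnerProductSpace

noncomputable section

/-- The ambient Euclidean space of rank `m`.  Via the fixed `W`-invariant inner product we
identify the space `V` containing the root system with its dual `V*`; the affine space `A`
underlying `V*` is then the Euclidean space itself. -/
abbrev E (m : ℕ) := EuclideanSpace ℝ (Fin m)

variable {m : ℕ}

/-- The coroot `α∨ = 2α/(α,α)` of a vector `α` (under the identification of `V` with `V*`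
given by the invariant inner product). -/
def coroot (α : E m) : E m := (2 / ⟪α, α⟫) • α

/-- The affine reflection `s_{α,k}(x) = x - (⟨α,x⟩ - k) α∨` as a function. -/
def affReflFun (α : E m) (k : ℤ) : E m → E m := fun x => x - (⟪α, x⟫ - (k : ℝ)) • coroot α

lemma affReflFun_involutive (α : E m) (k : ℤ) : Function.Involutive (affReflFun α k) := by
  intro x
  by_cases h : α = 0
  · simp [affReflFun, coroot, h]
  · have hαα : ⟪α, α⟫ ≠ (0:ℝ) := (inner_self_ne_zero (𝕜 := ℝ)).mpr h
    have h2 : ⟪α, coroot α⟫ = (2:ℝ) := by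
      unfold coroot
      rw [real_inner_smul_right, div_mul_cancel₀ _ hαα]
    have key : ∀ y : E m, ∀ s : ℝ, ⟪α, y - s • coroot α⟫ = ⟪α, y⟫ - 2 * s := by
      intro y s
      rw [inner_sub_right, real_inner_smul_right, h2]
      ring
    show affReflFun α k (x - (⟪α, x⟫ - (k:ℝ)) • coroot α) = x
    unfold affReflFun
    rw [key]
    rw [sub_sub, ← add_smul]
    rw [show (⟪α, x⟫ - (k:ℝ)) + (⟪α, x⟫ - 2 * (⟪α, x⟫ - (k:ℝ)) - (k:ℝ)) = 0 by ring]
    simp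

/-- The affine reflection `s_{α,k}` as a permutation of the affine space. -/
def affRefl (α : E m) (k : ℤ) : Equiv.Perm (E m) := (affReflFun_involutive α k).toPerm

/-- The affine Weyl group of a set of roots `Φ`: the group generated by all affine
reflections `s_{α,k}`, `α ∈ Φ`, `k ∈ ℤ`. -/
def Waff (Φ : Set (E m)) : Subgroup (Equiv.Perm (E m)) :=
  Subgroup.closure {w | ∃ α ∈ Φ, ∃ k : ℤ, w = affRefl α k}

/-- `Φ` is a reduced (crystallographic) root system spanning the ambient space. -/
structure IsRootSystem (Φ : Set (E m)) : Prop where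
  finite : Φ.Finite
  ne_zero : ∀ α ∈ Φ, α ≠ (0 : E m)
  span_eq_top : Submodule.span ℝ Φ = ⊤
  reflect_mem : ∀ α ∈ Φ, ∀ β ∈ Φ, β - ⟪α, β⟫ • coroot α ∈ Φ
  crystallographic : ∀ α ∈ Φ, ∀ β ∈ Φ, ∃ z : ℤ, ⟪α, coroot β⟫ = (z : ℝ)
  reduced : ∀ α ∈ Φ, ∀ t : ℝ, t • α ∈ Φ → t = 1 ∨ t = -1

/-- `B` is a system of simple roots of `Φ`. -/
structure IsSimpleSystem (Φ : Set (E m)) (B : Fin m → E m) : Prop where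
  mem : ∀ i, B i ∈ Φ
  indep : LinearIndependent ℝ B
  decomp : ∀ α ∈ Φ, (∃ c : Fin m → ℤ, α = ∑ j, (c j : ℝ) • B j ∧ ∀ j, 0 ≤ c j) ∨
                    (∃ c : Fin m → ℤ, α = ∑ j, (c j : ℝ) • B j ∧ ∀ j, c j ≤ 0)

/-- `ω` is the system of fundamental coweights relative to the simple roots `B`,
i.e. `⟨α_i, ω_j∨⟩ = δ_{ij}`. -/
def IsFundamentalCoweights (B ω : Fin m → E m) : Prop :=
  ∀ i j, ⟪B i, ω j⟫ = if i = j then (1 : ℝ) else 0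

/-- The wall `H_{α,k} = {x : ⟨α,x⟩ = k}`. -/
def wall (α : E m) (k : ℤ) : Set (E m) := {x | ⟪α, x⟫ = (k : ℝ)}

/-- The union of all walls of the root system `Φ`. -/
def allWalls (Φ : Set (E m)) : Set (E m) := ⋃ α ∈ Φ, ⋃ k : ℤ, wall α k

/-- An alcove: a connected component of the complement of the union of all walls. -/
def IsAlcove (Φ : Set (E m)) (C : Set (E m)) : Prop :=
  ∃ x ∈ (allWalls Φ)ᶜ, C = connectedComponentIn (allWalls Φ)ᶜ x

/-- The set `𝒲` of walls removed when forming geodesic tubes of direction `β∨`: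
all walls `H_{α,k}` with `⟨α, β∨⟩ = 0` (equivalently `α ∈ Φ_I`). -/
def tubeWalls (Φ : Set (E m)) (β : E m) : Set (E m) :=
  ⋃ α ∈ {α ∈ Φ | ⟪α, β⟫ = (0:ℝ)}, ⋃ k : ℤ, wall α k

/-- A geodesic tube of direction `β∨`: a connected component of `A ∖ ⋃𝒲`. -/
def IsGeodesicTube (Φ : Set (E m)) (β : E m) (T : Set (E m)) : Prop :=
  ∃ x ∈ (tubeWalls Φ β)ᶜ, T = connectedComponentIn (tubeWalls Φ β)ᶜ x

/-- `d_γ = inf_x d(x, γx)`. -/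
def minDisp (f : E m → E m) : ℝ := ⨅ x, dist x (f x)

/-- `Min(γ) = {x : d(x,γx) = d_γ}`. -/
def minSet (f : E m → E m) : Set (E m) := {x | dist x (f x) = minDisp f}

/-- A hyperbolic isometry: semisimple (`Min` nonempty) with `d_γ > 0`. -/
def IsHyperbolic (f : E m → E m) : Prop := (minSet f).Nonempty ∧ 0 < minDisp f

/-- `v` is the vector by which `γ` translates its min set. -/
def HasTransVec (f : E m → E m) (v : E m) : Prop := ∀ x ∈ minSet f, f x = x + v

/-- `x` is the barycenter of the polysimplex `s`: the average of the vertices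
(extreme points of the closure) of `s`. -/
def IsBarycenter (s : Set (E m)) (x : E m) : Prop :=
  ∃ F : Finset (E m), (F : Set (E m)) = Set.extremePoints ℝ (closure s) ∧ F.Nonempty ∧
    x = (F.card : ℝ)⁻¹ • ∑ y ∈ F, y

/-- The centerline `ℒ = x + ℝ β∨`. -/
def centerline (x β : E m) : Set (E m) := {p | ∃ t : ℝ, p = x + t • β}

/-! Every element of `W^aff` is an affine isometry `x ↦ M x + b` whose linear part `M` permutes
the roots and whose translation part `b` pairs integrally with them. `M` fixes the translation
vector `v` of `Min(w)`, a nonzero multiple of `β∨` since `w` is hyperbolic, hence fixes `β∨`;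
so `w` permutes the walls parallel to `β∨` and preserves the complement `U` of `⋃𝒲`. As `Min(w)`
is closed, convex and lies in no wall, Baire's theorem gives `x ∈ Min(w) ∩ U`. The line
`x + ℝβ∨` misses `⋃𝒲`, so `w x = x + v` lies in the component `T` of `x` in `U`; the
homeomorphism `w` of `U` maps `T` onto the component of `w x`, i.e. onto `T`. -/

open Set Filter Topology

lemma reflection_orthogonal_singleton_apply (α x : E m) :
    (ℝ ∙ α)ᗮ.reflection x = x - ⟪α, x⟫ • coroot α := by
  rw [Submodule.reflection_orthogonal_apply, Submodule.reflection_singleton_apply]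
  simp only [RCLike.ofReal_real_eq_id, id, ← real_inner_self_eq_norm_sq, coroot]
  module

lemma affReflFun_eq_reflection (α : E m) (k : ℤ) (x : E m) :
    affReflFun α k x = (ℝ ∙ α)ᗮ.reflection x + (k : ℝ) • coroot α := by
  rw [reflection_orthogonal_singleton_apply, affReflFun, sub_smul]
  abel

def coweightLattice (Φ : Set (E m)) : AddSubgroup (E m) where
  carrier := {b | ∀ α ∈ Φ, ∃ z : ℤ, ⟪α, b⟫ = z}
  add_mem' {a b} ha hb α hα := by
    obtain ⟨z, hz⟩ := ha α hα
    obtain ⟨z', hz'⟩ := hb α hα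
    exact ⟨z + z', by rw [inner_add_right, hz, hz', Int.cast_add]⟩
  zero_mem' α _ := ⟨0, by simp⟩
  neg_mem' {b} hb α hα := by
    obtain ⟨z, hz⟩ := hb α hα
    exact ⟨-z, by rw [inner_neg_right, hz, Int.cast_neg]⟩

lemma coroot_mem_coweightLattice {Φ : Set (E m)} (hΦ : IsRootSystem Φ) {α : E m} (hα : α ∈ Φ) :
    coroot α ∈ coweightLattice Φ :=
  fun β hβ => hΦ.crystallographic β hβ α hα

lemma LinearIsometryEquiv.map_mem_coweightLattice {Φ : Set (E m)} {M : E m ≃ₗᵢ[ℝ] E m}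
    (hM : M '' Φ = Φ) {b : E m} (hb : b ∈ coweightLattice Φ) : M b ∈ coweightLattice Φ := by
  rintro _ hα
  rw [← hM] at hα
  obtain ⟨α, hα, rfl⟩ := hα
  rw [M.inner_map_map]
  exact hb α hα

def affineRootSymmetries (Φ : Set (E m)) : Subgroup (Equiv.Perm (E m)) where
  carrier := {g | ∃ (M : E m ≃ₗᵢ[ℝ] E m) (b : E m),
    (∀ x, g x = M x + b) ∧ M '' Φ = Φ ∧ b ∈ coweightLattice Φ}
  mul_mem' := by
    rintro g₁ g₂ ⟨M₁, b₁, hg₁, hM₁, hb₁⟩ ⟨M₂, b₂, hg₂, hM₂, hb₂⟩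
    refine ⟨M₂.trans M₁, M₁ b₂ + b₁, fun x => ?_, ?_, ?_⟩
    · simp only [Equiv.Perm.coe_mul, Function.comp_apply, hg₁, hg₂, map_add,
        LinearIsometryEquiv.coe_trans]
      abel
    · rw [LinearIsometryEquiv.coe_trans, image_comp, hM₂, hM₁]
    · exact add_mem (M₁.map_mem_coweightLattice hM₁ hb₂) hb₁
  one_mem' := ⟨LinearIsometryEquiv.refl ℝ (E m), 0, fun x => by simp, by simp, zero_mem _⟩
  inv_mem' := by
    rintro g ⟨M, b, hg, hM, hb⟩
    have hM' : M.symm '' Φ = Φ := by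
      nth_rw 1 [← hM]
      rw [← image_comp]
      simp
    refine ⟨M.symm, -M.symm b, fun x => ?_, hM', neg_mem (M.symm.map_mem_coweightLattice hM' hb)⟩
    rw [Equiv.Perm.inv_eq_iff_eq, hg, map_add, map_neg, LinearIsometryEquiv.apply_symm_apply,
      LinearIsometryEquiv.apply_symm_apply, neg_add_cancel_right]

lemma affRefl_mem_affineRootSymmetries {Φ : Set (E m)} (hΦ : IsRootSystem Φ) {α : E m}
    (hα : α ∈ Φ) (k : ℤ) : affRefl α k ∈ affineRootSymmetries Φ := by
  set R := (ℝ ∙ α)ᗮ.reflection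
  have hRΦ : MapsTo R Φ Φ := fun β hβ => by
    simpa only [R, reflection_orthogonal_singleton_apply] using hΦ.reflect_mem α hα β hβ
  refine ⟨R, (k : ℝ) • coroot α, affReflFun_eq_reflection α k, ?_, ?_⟩
  · exact hRΦ.image_subset.antisymm fun β hβ => ⟨R β, hRΦ hβ, Submodule.reflection_reflection _ β⟩
  · rw [Int.cast_smul_eq_zsmul]
    exact zsmul_mem (coroot_mem_coweightLattice hΦ hα) k

lemma Waff_le_affineRootSymmetries {Φ : Set (E m)} (hΦ : IsRootSystem Φ) :
    Waff Φ ≤ affineRootSymmetries Φ :=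
  Subgroup.closure_le _ |>.2 <| by
    rintro _ ⟨α, hα, k, rfl⟩
    exact affRefl_mem_affineRootSymmetries hΦ hα k

lemma minDisp_le_dist (f : E m → E m) (x : E m) : minDisp f ≤ dist x (f x) :=
  ciInf_le ⟨0, by rintro _ ⟨y, rfl⟩; exact dist_nonneg⟩ x

lemma minSet_eq_setOf_le (f : E m → E m) : minSet f = {x | dist x (f x) ≤ minDisp f} :=
  ext fun x => (minDisp_le_dist f x).ge_iff_eq'.symm

section MinSet

variable {f : E m → E m}

lemma convex_minSet {M : E m →ₗ[ℝ] E m} {b : E m} (hf : ∀ x, f x = M x + b) :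
    Convex ℝ (minSet f) := by
  let g : E m →ᵃ[ℝ] E m := (LinearMap.id - M).toAffineMap - AffineMap.const ℝ (E m) b
  have hg : ∀ x, dist x (f x) = ‖g x‖ := fun x => by
    simp only [g, dist_eq_norm, hf, AffineMap.coe_sub, Pi.sub_apply, LinearMap.coe_toAffineMap,
      LinearMap.sub_apply, LinearMap.id_apply, AffineMap.const_apply, sub_sub]
  have := ((convexOn_norm convex_univ).comp_affineMap g).convex_le (minDisp f)
  simpa [minSet_eq_setOf_le, hg] using this

lemma isClosed_minSet (hf : Continuous f) : IsClosed (minSet f) :=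
  isClosed_eq (continuous_id.dist hf) continuous_const

lemma Isometry.mapsTo_minSet (hf : Isometry f) : MapsTo f (minSet f) (minSet f) :=
  fun x hx => (hf.dist_eq x (f x)).trans hx

lemma norm_eq_minDisp_of_hasTransVec {v : E m} (hv : HasTransVec f v) {x : E m}
    (hx : x ∈ minSet f) : ‖v‖ = minDisp f := by
  rw [← hx, hv x hx, dist_self_add_right]

lemma IsHyperbolic.ne_zero_of_hasTransVec {v : E m} (hf : IsHyperbolic f) (hv : HasTransVec f v) :
    v ≠ 0 := by
  obtain ⟨⟨x, hx⟩, hpos⟩ := hf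
  rw [← norm_pos_iff, norm_eq_minDisp_of_hasTransVec hv hx]
  exact hpos

lemma map_eq_self_of_hasTransVec {M : E m →ₗ[ℝ] E m} {b : E m} (hf : ∀ x, f x = M x + b)
    (hiso : Isometry f) (hne : (minSet f).Nonempty) {v : E m} (hv : HasTransVec f v) :
    M v = v := by
  obtain ⟨x, hx⟩ := hne
  have h₁ : f (f x) = f x + v := hv _ (hiso.mapsTo_minSet hx)
  rw [hv x hx, hf (x + v), map_add, add_right_comm, ← hf, hv x hx] at h₁
  exact add_left_cancel h₁

end MinSet

lemma isometry_of_forall_eq_add {F : Type*} [SeminormedAddCommGroup F] [NormedSpace ℝ F]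
    {f : F → F} {M : F →ₗᵢ[ℝ] F} {b : F} (hf : ∀ x, f x = M x + b) : Isometry f :=
  Isometry.of_dist_eq fun x y => by rw [hf, hf, dist_add_right, M.dist_map]

lemma isClosed_wall (α : E m) (k : ℤ) : IsClosed (wall α k) :=
  isClosed_eq (continuous_const.inner continuous_id) continuous_const

lemma Convex.subset_wall_of_eventually {S : Set (E m)} (hS : Convex ℝ S) {z : E m} (hz : z ∈ S)
    {α : E m} {k : ℤ} (h : ∀ᶠ y in 𝓝[S] z, y ∈ wall α k) : S ⊆ wall α k := by
  intro y hy
  have hzk : ⟪α, z⟫ = k := h.self_of_nhdsWithin hz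
  have hunit : ∀ᶠ t in 𝓝[>] (0 : ℝ), t ∈ Ioo 0 1 := Ioo_mem_nhdsGT one_pos
  have hseg : Tendsto (fun t : ℝ => z + t • (y - z)) (𝓝[>] 0) (𝓝[S] z) := by
    refine tendsto_nhdsWithin_iff.2 ⟨?_, hunit.mono fun t ht => ?_⟩
    · exact (Continuous.tendsto' (by fun_prop) 0 z (by simp)).mono_left nhdsWithin_le_nhds
    · exact hS.add_smul_sub_mem hz hy (Ioo_subset_Icc_self ht)
  obtain ⟨t, hty, ht⟩ := ((hseg.eventually h).and hunit).exists
  have hty : ⟪α, z⟫ + t * (⟪α, y⟫ - ⟪α, z⟫) = k := by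
    rw [← hty, inner_add_right, real_inner_smul_right, inner_sub_right]
  rw [hzk, add_eq_left, mul_eq_zero, sub_eq_zero] at hty
  exact hty.resolve_left ht.1.ne'

lemma Convex.not_subset_iUnion_wall {S : Set (E m)} (hS : Convex ℝ S) (hSc : IsClosed S)
    (hne : S.Nonempty) {Ψ : Set (E m)} (hΨ : Ψ.Countable)
    (h : ∀ α ∈ Ψ, ∀ k : ℤ, ¬ S ⊆ wall α k) : ¬ S ⊆ ⋃ α ∈ Ψ, ⋃ k : ℤ, wall α k := by
  intro hcov
  have := hne.to_subtype
  have := hSc.completeSpace_coe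
  have := hΨ.to_subtype
  obtain ⟨⟨⟨α, hα⟩, k⟩, z, hz⟩ := nonempty_interior_of_iUnion_of_closed (X := S) (ι := Ψ × ℤ)
    (f := fun p : Ψ × ℤ => ((↑) : S → E m) ⁻¹' wall p.1 p.2)
    (fun p => (isClosed_wall _ _).preimage continuous_subtype_val)
    (iUnion_eq_univ_iff.2 fun x => by simpa using hcov x.2)
  exact h α hα k <| hS.subset_wall_of_eventually z.2 <|
    preimage_coe_mem_nhds_subtype.1 (mem_interior_iff_mem_nhds.1 hz)

section TubeWalls

variable {Φ : Set (E m)} {β : E m}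

lemma mem_tubeWalls_iff {x : E m} :
    x ∈ tubeWalls Φ β ↔ ∃ α ∈ Φ, ⟪α, β⟫ = 0 ∧ ∃ k : ℤ, ⟪α, x⟫ = k := by
  simp [tubeWalls, wall, and_assoc]

lemma add_smul_mem_tubeWalls_iff {x : E m} (t : ℝ) :
    x + t • β ∈ tubeWalls Φ β ↔ x ∈ tubeWalls Φ β := by
  simp +contextual [tubeWalls, wall, inner_add_right, real_inner_smul_right]

lemma add_smul_mem_connectedComponentIn {x : E m} (hx : x ∉ tubeWalls Φ β) (t : ℝ) :
    x + t • β ∈ connectedComponentIn (tubeWalls Φ β)ᶜ x :=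
  (isPreconnected_range (f := fun t : ℝ => x + t • β) (by fun_prop)).subset_connectedComponentIn
    ⟨0, by simp⟩ (range_subset_iff.2 fun t => (add_smul_mem_tubeWalls_iff t).not.2 hx) ⟨t, rfl⟩

lemma preimage_tubeWalls {f : E m → E m} {M : E m ≃ₗᵢ[ℝ] E m} {b : E m}
    (hf : ∀ x, f x = M x + b) (hM : M '' Φ = Φ) (hb : b ∈ coweightLattice Φ) (hβ : M β = β) :
    f ⁻¹' tubeWalls Φ β = tubeWalls Φ β := by
  ext x
  rw [mem_preimage, mem_tubeWalls_iff, mem_tubeWalls_iff]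
  conv_lhs => rw [← hM, exists_mem_image]
  refine exists_congr fun α => and_congr_right fun hα => ?_
  obtain ⟨z, hz⟩ := hb (M α) (hM ▸ mem_image_of_mem M hα)
  have hαβ : ⟪M α, β⟫ = ⟪α, β⟫ := by
    conv_lhs => rw [← hβ]
    exact M.inner_map_map α β
  rw [hαβ, hf, inner_add_right, hz, M.inner_map_map]
  refine and_congr_right fun _ => ⟨fun ⟨k, hk⟩ => ⟨k - z, ?_⟩, fun ⟨k, hk⟩ => ⟨k + z, ?_⟩⟩ <;>
    push_cast <;> linarith

end TubeWalls

lemma Homeomorph.image_connectedComponentIn_eq_self {X : Type*} [TopologicalSpace X]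
    (h : X ≃ₜ X) {U : Set X} (hU : h '' U = U) {x : X} (hx : x ∈ U)
    (hhx : h x ∈ connectedComponentIn U x) :
    h '' connectedComponentIn U x = connectedComponentIn U x := by
  rw [h.image_connectedComponentIn hx, hU, ← connectedComponentIn_eq hhx]

theorem stabilizes_tube_criterion_general {m : ℕ} (Φ : Set (E m)) (hΦ : IsRootSystem Φ)
    (ω : Fin m → E m)
    (i : Fin m)
    (w : Equiv.Perm (E m)) (hw : w ∈ Waff Φ) (hhyp : IsHyperbolic (w : E m → E m))
    (v : E m) (hv : HasTransVec (w : E m → E m) v)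
    (hpar : ∃ c : ℝ, v = c • ω i)
    (hnwall : ∀ α ∈ Φ, ∀ k : ℤ, ¬ minSet (w : E m → E m) ⊆ wall α k) :
    ∃ T, IsGeodesicTube Φ (ω i) T ∧ (w : E m → E m) '' T = T := by
  obtain ⟨M, b, hwMb, hM, hb⟩ := Waff_le_affineRootSymmetries hΦ hw
  obtain ⟨c, rfl⟩ := hpar
  have hiso : Isometry w := isometry_of_forall_eq_add (M := M.toLinearIsometry) hwMb
  have hMω : M (ω i) = ω i := by
    have hc : c ≠ 0 := left_ne_zero_of_smul (hhyp.ne_zero_of_hasTransVec hv)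
    have := map_eq_self_of_hasTransVec (M := M.toLinearMap) hwMb hiso hhyp.1 hv
    rwa [map_smul, smul_right_inj hc] at this
  have hU : w '' (tubeWalls Φ (ω i))ᶜ = (tubeWalls Φ (ω i))ᶜ := by
    rw [Equiv.image_compl, ← (Equiv.preimage_eq_iff_eq_image _ _ _).1
      (preimage_tubeWalls hwMb hM hb hMω)]
  obtain ⟨x, hxS, hxU⟩ := not_subset.1 <|
    (convex_minSet (M := M.toLinearMap) hwMb).not_subset_iUnion_wall
      (isClosed_minSet hiso.continuous) hhyp.1 (hΦ.finite.subset (sep_subset Φ _)).countable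
      fun α hα => hnwall α hα.1
  refine ⟨_, ⟨x, hxU, rfl⟩,
    (IsometryEquiv.mk w hiso).toHomeomorph.image_connectedComponentIn_eq_self hU hxU ?_⟩
  show w x ∈ _
  rw [hv x hxS]
  exact add_smul_mem_connectedComponentIn hxU c

/-- A hyperbolic element `w ∈ W^aff` whose translation vector is parallel
to the fundamental coweight `β∨ = ω_i∨` and whose min set is not contained in any wall
stabilizes some geodesic tube of direction `β∨`. -/
theorem stabilizes_tube_criterion {m : ℕ} (Φ : Set (E m)) (hΦ : IsRootSystem Φ)
    (B ω : Fin m → E m) (hB : IsSimpleSystem Φ B) (hω : IsFundamentalCoweights B ω)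
    (i : Fin m)
    (w : Equiv.Perm (E m)) (hw : w ∈ Waff Φ) (hhyp : IsHyperbolic (w : E m → E m))
    (v : E m) (hv : HasTransVec (w : E m → E m) v)
    (hpar : ∃ c : ℝ, v = c • ω i)
    (hnwall : ∀ α ∈ Φ, ∀ k : ℤ, ¬ minSet (w : E m → E m) ⊆ wall α k) :
    ∃ T, IsGeodesicTube Φ (ω i) T ∧ (w : E m → E m) '' T = T :=
  stabilizes_tube_criterion_general Φ hΦ ω i w hw hhyp v hv hpar hnwall

end
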